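/- arXiv:2004.07452 — 2 statements merged into one kernel-verified Lean document; each statement's English description precedes it below -/
import Mathlib

section
/- For a finite graph G on n vertices with Laplacian matrix L(G), the number of rooted spanning forests of G equals det(Iₙ + L(G)). -/
open SimpleGraph

/-- A rooted spanning forest of `G`: a spanning acyclic subgraph together with a set of
roots containing exactly one vertex of each connected component. -/
def RootedSpanningForest {V : Type*} (G : SimpleGraph V) : Type _ :=
  {p : SimpleGraph V × Set V // p.1 ≤ G ∧ p.1.IsAcyclic ∧
    ∀ c : p.1.ConnectedComponent, ∃! v, v ∈ p.2 ∧ p.1.connectedComponentMk v = c}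

/-- The number of rooted spanning forests of `G`. -/
noncomputable def numRootedSpanningForests {V : Type*} (G : SimpleGraph V) : ℕ :=
  Nat.card (RootedSpanningForest G)

open scoped Classical in
/-- The Laplacian matrix of `G` with integer entries. -/
noncomputable def lap {V : Type*} [Fintype V] [DecidableEq V] (G : SimpleGraph V) : Matrix V V ℤ :=
  G.lapMatrix ℤ

/-!
Row `j` of `1 + L(G)` is `e_j + ∑_{i ~ j} (e_j - e_i)`. By multilinearity, `det (1 + L(G))` is
the sum, over all maps `f : V → Option V` sending each vertex to `none` or to a neighbour, of the
determinant of the matrix with rows `e_j - e_{f j}` (`e_j` when `f j = none`). If following `f`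
from any vertex ends at `none`, this matrix is unitriangular for the order by height, so its
determinant is `1`; otherwise the indicator of the vertices from which `f` never stops is in its
kernel, so its determinant is `0`. The terminating maps `f` are exactly the rooted spanning forests
of `G`, oriented towards their roots: `f j` is the parent of `j`, and `f j = none` at the roots.
-/

open Relation

section Forest

variable {V : Type*}

/-- `f : V → Option V` is read as a parent function: `f j = some i` makes `i` the parent of `j`
and `f j = none` makes `j` a root. It describes a rooted forest exactly when `IsParentOf f` is
well founded, i.e. when following parents from any vertex ends at a root. -/
def IsParentOf (f : V → Option V) (i j : V) : Prop := f j = some i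

def parentGraph (f : V → Option V) : SimpleGraph V := fromRel (IsParentOf f)

theorem SimpleGraph.Reachable.iff_of_forall_adj {G : SimpleGraph V} {P : V → Prop}
    (hP : ∀ a b, G.Adj a b → (P a ↔ P b)) {a b : V} (h : G.Reachable a b) : P a ↔ P b := by
  obtain ⟨p⟩ := h
  induction p with
  | nil => rfl
  | cons hadj _ ih => exact (hP _ _ hadj).trans ih

theorem SimpleGraph.Reachable.exists_adj_dist_lt {G : SimpleGraph V} {j r : V}
    (h : G.Reachable j r) (hne : j ≠ r) : ∃ b, G.Adj j b ∧ G.dist b r < G.dist j r := by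
  obtain ⟨p, hp⟩ := h.exists_walk_length_eq_dist
  have hnil : ¬p.Nil := Walk.not_nil_of_ne hne
  refine ⟨p.snd, p.adj_snd hnil, ?_⟩
  have := dist_le p.tail
  have := p.length_tail_add_one hnil
  omega

theorem SimpleGraph.IsAcyclic.eq_of_adj_of_dist_lt {G : SimpleGraph V} (hG : G.IsAcyclic)
    {j b b' r : V} (hb : G.Adj j b) (hb' : G.Adj j b') (hlt : G.dist b r < G.dist j r)
    (hlt' : G.dist b' r < G.dist j r) : b = b' := by
  have hpath : ∀ {c} (hc : G.Adj j c), G.dist c r < G.dist j r →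
      ∃ p : G.Walk c r, (Walk.cons hc p).IsPath := by
    intro c hc hlt
    have hjr : G.Reachable j r := Reachable.of_dist_ne_zero (by omega)
    obtain ⟨p, hp⟩ := (hc.symm.reachable.trans hjr).exists_walk_length_eq_dist
    have := dist_le (Walk.cons hc p)
    refine ⟨p, Walk.isPath_of_length_eq_dist _ ?_⟩
    rw [Walk.length_cons] at this ⊢
    omega
  obtain ⟨p, hp⟩ := hpath hb hlt
  obtain ⟨p', hp'⟩ := hpath hb' hlt'
  have := congrArg (fun q : G.Path j r => q.1.snd)
    ((hG.subsingleton_path j r).elim ⟨_, hp⟩ ⟨_, hp'⟩)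
  simpa using this

section WellFounded

variable {f : V → Option V}

theorem reflTransGen_isParentOf_iff {a b x : V} (h : f a = some b) (hx : a ≠ x) :
    ReflTransGen (IsParentOf f) x a ↔ ReflTransGen (IsParentOf f) x b := by
  simp [ReflTransGen.cases_tail_iff (IsParentOf f) x a, IsParentOf, h, hx]

theorem eq_of_reflTransGen_of_eq_none {r x : V} (hr : f r = none)
    (h : ReflTransGen (IsParentOf f) x r) : x = r := by
  rcases (ReflTransGen.cases_tail_iff _ _ _).mp h with h | ⟨c, -, hc⟩
  · exact h.symm
  · simp [IsParentOf, hr] at hc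

theorem parentGraph_adj_of_eq_some (hf : WellFounded (IsParentOf f)) {i j : V}
    (h : f j = some i) : (parentGraph f).Adj j i :=
  (fromRel_adj _ _ _).mpr ⟨fun e => hf.asymmetric _ _ h (e ▸ h), Or.inr h⟩

theorem parentGraph_le_iff (hf : WellFounded (IsParentOf f)) {G : SimpleGraph V} :
    parentGraph f ≤ G ↔ ∀ j i, f j = some i → G.Adj j i := by
  refine ⟨fun h j i hji => h (parentGraph_adj_of_eq_some hf hji), fun h a b hab => ?_⟩
  rcases ((fromRel_adj _ _ _).mp hab).2 with hab | hba
  · exact (h b a hab).symm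
  · exact h a b hba

theorem parentGraph_isBridge (hf : WellFounded (IsParentOf f)) {i j : V} (h : f j = some i) :
    (parentGraph f).IsBridge s(j, i) := by
  rw [isBridge_iff]
  intro hreach
  -- without the edge `j — i`, the descendants of `j` are closed under adjacency
  have hinv : ∀ a b, ((parentGraph f).deleteEdges {s(j, i)}).Adj a b →
      (ReflTransGen (IsParentOf f) j a ↔ ReflTransGen (IsParentOf f) j b) := by
    intro a b hab
    rw [deleteEdges_adj, parentGraph, fromRel_adj] at hab
    obtain ⟨⟨-, hba | hab'⟩, hne⟩ := hab
    · refine (reflTransGen_isParentOf_iff hba ?_).symm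
      rintro rfl
      obtain rfl : a = i := Option.some.inj (hba.symm.trans h)
      exact hne (by simp [Sym2.eq_swap])
    · refine reflTransGen_isParentOf_iff hab' ?_
      rintro rfl
      obtain rfl : b = i := Option.some.inj (hab'.symm.trans h)
      exact hne rfl
  have hji := (hreach.iff_of_forall_adj hinv).mp ReflTransGen.refl
  exact hf.transGen.asymmetric _ _ (TransGen.head' h hji) (TransGen.head' h hji)

theorem isAcyclic_parentGraph (hf : WellFounded (IsParentOf f)) :
    (parentGraph f).IsAcyclic := by
  refine isAcyclic_iff_forall_adj_isBridge.mpr fun a b hab => ?_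
  rcases ((fromRel_adj _ _ _).mp hab).2 with hba | hab
  · rw [Sym2.eq_swap]
    exact parentGraph_isBridge hf hba
  · exact parentGraph_isBridge hf hab

theorem existsUnique_root_parentGraph (hf : WellFounded (IsParentOf f))
    (c : (parentGraph f).ConnectedComponent) :
    ∃! r, r ∈ {j | f j = none} ∧ (parentGraph f).connectedComponentMk r = c := by
  obtain ⟨j, rfl⟩ := c.exists_rep
  have hroot : ∃ r, f r = none ∧ ReflTransGen (IsParentOf f) r j := by
    induction j using hf.induction with
    | _ j ih =>
      cases h : f j with
      | none => exact ⟨j, h, .refl⟩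
      | some i =>
        obtain ⟨r, hr, hri⟩ := ih i h
        exact ⟨r, hr, hri.tail h⟩
  obtain ⟨r, hr, hrj⟩ := hroot
  have hreach : ∀ {a b}, ReflTransGen (IsParentOf f) a b → (parentGraph f).Reachable a b := by
    intro a b h
    rw [reachable_iff_reflTransGen]
    exact ReflTransGen.mono (fun x y hxy => (parentGraph_adj_of_eq_some hf hxy).symm) a b h
  refine ⟨r, ⟨hr, ConnectedComponent.eq.mpr (hreach hrj)⟩, ?_⟩
  rintro r' ⟨hr', hr'j⟩
  have hrr' : (parentGraph f).Reachable r r' :=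
    (hreach hrj).trans (ConnectedComponent.eq.mp hr'j).symm
  have hinv : ∀ a b, (parentGraph f).Adj a b →
      (ReflTransGen (IsParentOf f) r a ↔ ReflTransGen (IsParentOf f) r b) := by
    intro a b hab
    rcases ((fromRel_adj _ _ _).mp hab).2 with hab | hba
    · exact (reflTransGen_isParentOf_iff hab fun e => by simp [IsParentOf, e, hr] at hab).symm
    · exact reflTransGen_isParentOf_iff hba fun e => by simp [IsParentOf, e, hr] at hba
  exact (eq_of_reflTransGen_of_eq_none hr' ((hrr'.iff_of_forall_adj hinv).mp .refl)).symm

theorem eq_of_parentGraph_eq (hf : WellFounded (IsParentOf f)) {g : V → Option V}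
    (hG : parentGraph f = parentGraph g) (hroots : {j | f j = none} = {j | g j = none}) :
    f = g := by
  funext j
  induction j using hf.induction with
  | _ j ih =>
    cases hfj : f j with
    | none => exact ((Set.ext_iff.mp hroots j).mp hfj).symm
    | some i =>
      have hadj := hG ▸ parentGraph_adj_of_eq_some hf hfj
      rcases ((fromRel_adj _ _ _).mp hadj).2 with hgi | hgj
      · exact absurd ((ih i hfj).trans hgi) (hf.asymmetric _ _ hfj)
      · exact hgj.symm

end WellFounded

section ForestParent

variable {H : SimpleGraph V} {R : Set V}
  (hR : ∀ c : H.ConnectedComponent, ∃! r, r ∈ R ∧ H.connectedComponentMk r = c)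

noncomputable def forestRoot (j : V) : V := (hR (H.connectedComponentMk j)).exists.choose

theorem forestRoot_mem (j : V) : forestRoot hR j ∈ R :=
  (hR _).exists.choose_spec.1

theorem reachable_forestRoot (j : V) : H.Reachable j (forestRoot hR j) :=
  (ConnectedComponent.eq.mp (hR _).exists.choose_spec.2).symm

theorem forestRoot_eq_self {j : V} (hj : j ∈ R) : forestRoot hR j = j :=
  (hR _).unique (hR _).exists.choose_spec ⟨hj, rfl⟩

theorem forestRoot_eq_of_adj {a b : V} (hab : H.Adj a b) :
    forestRoot hR a = forestRoot hR b := by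
  simp only [forestRoot, ConnectedComponent.eq.mpr hab.reachable]

theorem exists_adj_dist_forestRoot_lt {j : V} (hj : j ∉ R) :
    ∃ b, H.Adj j b ∧ H.dist b (forestRoot hR j) < H.dist j (forestRoot hR j) :=
  (reachable_forestRoot hR j).exists_adj_dist_lt fun e => hj (e ▸ forestRoot_mem hR j)

open scoped Classical in
noncomputable def forestParent (j : V) : Option V :=
  if hj : j ∈ R then none else some (exists_adj_dist_forestRoot_lt hR hj).choose

theorem forestParent_eq_none_iff {j : V} : forestParent hR j = none ↔ j ∈ R := by
  unfold forestParent
  split_ifs with hj <;> simp [hj]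

theorem forestParent_spec {i j : V} (h : forestParent hR j = some i) :
    H.Adj j i ∧ H.dist i (forestRoot hR j) < H.dist j (forestRoot hR j) := by
  unfold forestParent at h
  split_ifs at h with hj
  exact Option.some.inj h ▸ (exists_adj_dist_forestRoot_lt hR hj).choose_spec

theorem wellFounded_forestParent : WellFounded (IsParentOf (forestParent hR)) := by
  refine Subrelation.wf (fun {i j} h => ?_)
    (InvImage.wf (fun j => H.dist j (forestRoot hR j)) wellFounded_lt)
  obtain ⟨hji, hlt⟩ := forestParent_spec hR h
  simpa [InvImage, forestRoot_eq_of_adj hR hji] using hlt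

theorem forestParent_eq_some (hH : H.IsAcyclic) {a b : V} (hab : H.Adj a b)
    (hlt : H.dist b (forestRoot hR a) < H.dist a (forestRoot hR a)) :
    forestParent hR a = some b := by
  cases h : forestParent hR a with
  | none =>
    rw [forestRoot_eq_self hR ((forestParent_eq_none_iff hR).mp h), dist_self] at hlt
    exact absurd hlt (Nat.not_lt_zero _)
  | some c =>
    obtain ⟨hac, hc⟩ := forestParent_spec hR h
    rw [hH.eq_of_adj_of_dist_lt hac hab hc hlt]

theorem parentGraph_forestParent (hH : H.IsAcyclic) : parentGraph (forestParent hR) = H := by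
  ext a b
  rw [parentGraph, fromRel_adj]
  refine ⟨fun ⟨_, h⟩ => h.elim (fun h => (forestParent_spec hR h).1.symm)
    (fun h => (forestParent_spec hR h).1), fun hab => ⟨hab.ne, ?_⟩⟩
  have hroot := forestRoot_eq_of_adj hR hab
  have hne : H.dist a (forestRoot hR a) ≠ H.dist b (forestRoot hR a) := by
    rw [dist_comm, dist_comm (u := b)]
    exact hH.dist_ne_of_adj hab (reachable_forestRoot hR a).symm
  rcases hne.lt_or_gt with hlt | hlt
  · exact Or.inl (forestParent_eq_some hR hH hab.symm (hroot ▸ hlt))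
  · exact Or.inr (forestParent_eq_some hR hH hab hlt)

end ForestParent

noncomputable def toRootedSpanningForest (G : SimpleGraph V) :
    {f : V → Option V // parentGraph f ≤ G ∧ WellFounded (IsParentOf f)} →
      RootedSpanningForest G :=
  fun f => ⟨(parentGraph f.1, {j | f.1 j = none}), f.2.1, isAcyclic_parentGraph f.2.2,
    existsUnique_root_parentGraph f.2.2⟩

theorem bijective_toRootedSpanningForest (G : SimpleGraph V) :
    Function.Bijective (toRootedSpanningForest G) := by
  refine ⟨fun ⟨f, _, hf⟩ ⟨g, _, _⟩ h => ?_, fun ⟨⟨H, R⟩, hle, hH, hR⟩ => ?_⟩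
  · obtain ⟨hG, hroots⟩ := Prod.mk.inj (congrArg Subtype.val h)
    exact Subtype.ext (eq_of_parentGraph_eq hf hG hroots)
  · have hgraph := parentGraph_forestParent hR hH
    refine ⟨⟨forestParent hR, hgraph.trans_le hle, wellFounded_forestParent hR⟩, ?_⟩
    exact Subtype.ext (Prod.ext hgraph (Set.ext fun j => forestParent_eq_none_iff hR))

theorem numRootedSpanningForests_eq_card (G : SimpleGraph V) :
    numRootedSpanningForests G =
      Nat.card {f : V → Option V // parentGraph f ≤ G ∧ WellFounded (IsParentOf f)} :=
  (Nat.card_eq_of_bijective _ (bijective_toRootedSpanningForest G)).symm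

end Forest

section Determinant

open Matrix

variable {V : Type*} [Fintype V] [DecidableEq V] {R : Type*} [CommRing R]

def parentMatrix (f : V → Option V) : Matrix V V R :=
  of fun j c => (if j = c then 1 else 0) - if f j = some c then 1 else 0

theorem det_parentMatrix_of_wellFounded {f : V → Option V} (hf : WellFounded (IsParentOf f)) :
    (parentMatrix f : Matrix V V R).det = 1 := by
  have : IsWellFounded V (IsParentOf f) := ⟨hf⟩
  set b := IsWellFounded.rank (IsParentOf f)
  have hentry : ∀ i j, b i ≤ b j →
      (parentMatrix f : Matrix V V R) i j = if i = j then 1 else 0 := by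
    intro i j hij
    have : f i ≠ some j := fun h =>
      (IsWellFounded.rank_lt_of_rel (r := IsParentOf f) h).not_ge hij
    simp [parentMatrix, this]
  have hblock : (parentMatrix f : Matrix V V R)ᵀ.BlockTriangular b := fun i j hlt => by
    simp [hentry j i hlt.le, ne_of_apply_ne b hlt.ne]
  rw [← det_transpose, hblock.det]
  refine Finset.prod_eq_one fun a _ => ?_
  have : (parentMatrix f : Matrix V V R)ᵀ.toSquareBlock b a = 1 := by
    ext ⟨i, hi⟩ ⟨j, hj⟩
    simp [toSquareBlock_def, hentry j i (hj.trans hi.symm).le, one_apply, eq_comm]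
  rw [this, det_one]

theorem det_parentMatrix_of_not_wellFounded [IsDomain R] {f : V → Option V}
    (hf : ¬WellFounded (IsParentOf f)) : (parentMatrix f : Matrix V V R).det = 0 := by
  classical
  obtain ⟨j, hj⟩ : ∃ j, ¬Acc (IsParentOf f) j := by
    by_contra! h
    exact hf ⟨h⟩
  refine exists_mulVec_eq_zero_iff.mp ⟨fun v => if Acc (IsParentOf f) v then 0 else 1, ?_, ?_⟩
  · intro h
    simpa [hj] using congrFun h j
  · ext k
    -- `k` is inaccessible exactly when it has an inaccessible parent
    have hacc : Acc (IsParentOf f) k ↔ ∀ i, f k = some i → Acc (IsParentOf f) i :=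
      ⟨fun h _ hi => h.inv hi, Acc.intro (r := IsParentOf f) k⟩
    simp only [mulVec, dotProduct, parentMatrix, of_apply, sub_mul, ite_mul, one_mul, zero_mul,
      Finset.sum_sub_distrib, Finset.sum_ite_eq, Finset.mem_univ, if_true, Pi.zero_apply]
    cases hk : f k <;> simp_all

variable (G : SimpleGraph V) [DecidableRel G.Adj]

def parentChoices (j : V) : Finset (Option V) := insert none ((G.neighborFinset j).image some)

theorem mem_piFinset_parentChoices {f : V → Option V} :
    f ∈ Fintype.piFinset (parentChoices G) ↔ ∀ j i, f j = some i → G.Adj j i := by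
  refine Fintype.mem_piFinset.trans (forall_congr' fun j => ?_)
  cases f j <;> simp [parentChoices]

theorem one_add_lapMatrix_row (j : V) :
    (1 + G.lapMatrix R) j =
      ∑ o ∈ parentChoices G j, (parentMatrix (fun _ => o) : Matrix V V R) j := by
  ext c
  rw [parentChoices, Finset.sum_insert (by simp),
    Finset.sum_image (fun _ _ _ _ => Option.some.inj)]
  simp [parentMatrix, lapMatrix, degMatrix, diagonal_apply, one_apply, Finset.sum_sub_distrib]

theorem det_one_add_lapMatrix_eq_sum :
    (1 + G.lapMatrix R).det =
      ∑ f ∈ Fintype.piFinset (parentChoices G), (parentMatrix f : Matrix V V R).det :=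
  (congrArg detRowAlternating (funext (one_add_lapMatrix_row G))).trans
    (detRowAlternating.toMultilinearMap.map_sum_finset _ _)

variable (R) in
theorem det_one_add_lapMatrix [IsDomain R] :
    (1 + G.lapMatrix R).det = numRootedSpanningForests G := by
  classical
  rw [det_one_add_lapMatrix_eq_sum, numRootedSpanningForests_eq_card, Nat.card_eq_fintype_card,
    Fintype.card_subtype]
  have hdet : ∀ f : V → Option V, (parentMatrix f : Matrix V V R).det =
      if WellFounded (IsParentOf f) then 1 else 0 := fun f => by
    split_ifs with hf
    · exact det_parentMatrix_of_wellFounded hf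
    · exact det_parentMatrix_of_not_wellFounded hf
  rw [Finset.sum_congr rfl fun f _ => hdet f, Finset.sum_boole]
  congr 2
  ext f
  simp only [Finset.mem_filter, Finset.mem_univ, true_and]
  exact and_congr_left fun hf =>
    (mem_piFinset_parentChoices G).trans (parentGraph_le_iff hf).symm

end Determinant

theorem numRootedSpanningForests_eq_det_one_add_lap
    {V : Type*} [Fintype V] [DecidableEq V] (G : SimpleGraph V) :
    (numRootedSpanningForests G : ℤ) = (1 + lap G).det := by
  classical
  exact (det_one_add_lapMatrix ℤ G).symm
end

section
/- Let P(z) = z^p + a₁z^{p+1} + … + a_{s−1}z^{p+s−1} + z^{p+s} be a bimonic integer Laurent polynomial and let 𝒜 be its s×s companion matrix (the matrix with I_{s−1} in the top-right block and last row (−1, −a₁, …, −a_{s−1})). Let Tₙ = circ(0,1,0,…,0) be the n×n cyclic shift matrix and L = P(Tₙ) : ℤⁿ → ℤⁿ. Then coker(L) ≅ coker(𝒜ⁿ − I_s). -/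
open scoped Classical in
/-- The cokernel `ℤ^α / im M` of an integer matrix `M`. -/
noncomputable abbrev coker {α : Type*} [Fintype α] (M : Matrix α α ℤ) :=
  (α → ℤ) ⧸ LinearMap.range (Matrix.toLin' M)

/-- The companion matrix of the bimonic integer Laurent polynomial
`P(z) = z^p (c 0 + c 1 · z + ⋯ + c s · z^s)` (with `c 0 = c s = 1`): the `s × s` matrix
with the identity block `I_{s-1}` in the top-right corner and bottom row
`(-c 0, -c 1, …, -c (s-1))`. -/
def compMat (s : ℕ) (c : ℕ → ℤ) : Matrix (Fin s) (Fin s) ℤ :=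
  Matrix.of fun i j =>
    if (i : ℕ) + 1 = s then -c j else if (j : ℕ) = (i : ℕ) + 1 then 1 else 0

/-- The matrix `P(Tₙ)` where `Tₙ` is the `n × n` cyclic shift matrix and
`P(z) = z^p (c 0 + c 1 · z + ⋯ + c s · z^s)` is an integer Laurent polynomial:
entrywise, `P(Tₙ) i j = ∑ t, c t · [j = i + p + t mod n]`. -/
def laurentShift (n : ℕ) (p : ℤ) (s : ℕ) (c : ℕ → ℤ) : Matrix (ZMod n) (ZMod n) ℤ :=
  Matrix.of fun i j =>
    ∑ t ∈ Finset.range (s + 1), c t * (if j = i + ((p + t : ℤ) : ZMod n) then 1 else 0)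

/-!
Both cokernels are `ℤ[X] ⧸ (Q, Xⁿ - 1)`, where `Q = coeffPoly s c`, so that `P(z) = z^p Q(z)`.
If the iterates `v, T v, …, T^(d-1) v` of a vector under an endomorphism `T` form a basis and
`f(T) v = 0` for a monic `f` of degree `d`, then `g ↦ g(T) v` identifies `M` with `R[X] ⧸ (f)`,
hence `M ⧸ g(T) M` with `R[X] ⧸ (f, g)`. For `Tₙ` on `ℤ^(ℤ/n)` take `v = δ₀`, `f = Xⁿ - 1` and
`g = Q`; the factor `Tₙ^p` of `P(Tₙ)` is invertible, so it does not change the image. For `𝒜`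
take `v = e_(s-1)`, `f = Q` (indeed `Q(𝒜) = 0`) and `g = Xⁿ - 1`; the iterates `𝒜^k e_(s-1)`
have unitriangular coordinates once the order of the rows is reversed.
-/

open Polynomial Matrix

namespace Module.End

variable {R M : Type*} [CommRing R] [AddCommGroup M] [Module R M]

noncomputable def aevalAt (T : Module.End R M) (v : M) : R[X] →ₗ[R] M :=
  LinearMap.applyₗ v ∘ₗ (aeval T).toLinearMap

variable {T : Module.End R M} {v : M}

@[simp]
lemma aevalAt_apply (g : R[X]) : aevalAt T v g = aeval T g v := rfl

lemma aevalAt_mul (g h : R[X]) : aevalAt T v (g * h) = aeval T g (aevalAt T v h) := by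
  simp [aeval_mul]

variable {f : R[X]} {d : ℕ} (b : Module.Basis (Fin d) R M)

lemma aevalAt_surjective (hb : ∀ k, b k = (T ^ (k : ℕ)) v) :
    Function.Surjective (aevalAt T v) := by
  rw [← LinearMap.range_eq_top, eq_top_iff, ← b.span_eq, Submodule.span_le]
  rintro _ ⟨k, rfl⟩
  exact ⟨X ^ (k : ℕ), by simp [hb]⟩

lemma ker_aevalAt (hb : ∀ k, b k = (T ^ (k : ℕ)) v) (hf : f.Monic) (hd : f.natDegree = d)
    (hfv : aeval T f v = 0) :
    LinearMap.ker (aevalAt T v) = (Ideal.span {f}).restrictScalars R := by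
  ext g
  simp only [LinearMap.mem_ker, Submodule.restrictScalars_mem, Ideal.mem_span_singleton]
  constructor
  · intro hg
    set r := g %ₘ f with hr
    have hrv : aeval T r v = 0 := by
      have := congrArg (aevalAt T v) (modByMonic_add_div g f)
      rwa [map_add, mul_comm, aevalAt_mul, aevalAt_apply f, hfv, map_zero, add_zero, hg] at this
    have hrd : r.natDegree < d ∨ r = 0 := by
      by_cases hf1 : f = 1
      · simp [hr, hf1]
      · exact .inl (hd ▸ natDegree_modByMonic_lt g hf hf1)
    suffices r = 0 from (modByMonic_eq_zero_iff_dvd hf).mp this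
    obtain hrd | hr0 := hrd
    · have hcoeff := Fintype.linearIndependent_iff.mp b.linearIndependent (fun k => r.coeff k)
        (by rw [aeval_eq_sum_range' hrd, LinearMap.sum_apply,
              ← Fin.sum_univ_eq_sum_range (fun k => (r.coeff k • T ^ k) v)] at hrv
            simpa only [hb, LinearMap.smul_apply] using hrv)
      ext k
      by_cases hk : k < d
      · simpa using hcoeff ⟨k, hk⟩
      · exact coeff_eq_zero_of_natDegree_lt (by omega)
    · exact hr0
  · rintro ⟨q, rfl⟩
    rw [mul_comm, aevalAt_mul, aevalAt_apply f, hfv, map_zero]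

lemma ker_mkQ_comp_aevalAt (hb : ∀ k, b k = (T ^ (k : ℕ)) v) (hf : f.Monic)
    (hd : f.natDegree = d) (hfv : aeval T f v = 0) (g : R[X]) :
    LinearMap.ker ((LinearMap.range (aeval T g)).mkQ ∘ₗ aevalAt T v) =
      (Ideal.span {f, g}).restrictScalars R := by
  have hker := ker_aevalAt b hb hf hd hfv
  ext h
  simp only [LinearMap.mem_ker, LinearMap.comp_apply, Submodule.mkQ_apply,
    Submodule.Quotient.mk_eq_zero, Submodule.restrictScalars_mem, Ideal.mem_span_pair]
  constructor
  · rintro ⟨m, hm⟩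
    obtain ⟨k, rfl⟩ := aevalAt_surjective b hb m
    have hdiff : h - g * k ∈ LinearMap.ker (aevalAt T v) := by
      rw [LinearMap.mem_ker, map_sub, aevalAt_mul, hm, sub_self]
    rw [hker, Submodule.restrictScalars_mem, Ideal.mem_span_singleton'] at hdiff
    obtain ⟨q, hq⟩ := hdiff
    exact ⟨q, k, by linear_combination hq⟩
  · rintro ⟨a, c, rfl⟩
    have haf : aevalAt T v (a * f) = 0 := by
      rw [← LinearMap.mem_ker, hker]
      exact Ideal.mul_mem_left _ a (Ideal.mem_span_singleton_self f)
    rw [map_add, haf, zero_add, mul_comm, aevalAt_mul]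
    exact LinearMap.mem_range_self _ _

noncomputable def quotRangeAevalEquiv (hb : ∀ k, b k = (T ^ (k : ℕ)) v) (hf : f.Monic)
    (hd : f.natDegree = d) (hfv : aeval T f v = 0) (g : R[X]) :
    (M ⧸ LinearMap.range (aeval T g)) ≃ₗ[R] R[X] ⧸ (Ideal.span {f, g}).restrictScalars R :=
  ((Submodule.quotEquivOfEq _ _ (ker_mkQ_comp_aevalAt b hb hf hd hfv g).symm).trans
    (LinearMap.quotKerEquivOfSurjective _
      ((Submodule.mkQ_surjective _).comp (aevalAt_surjective b hb)))).symm

end Module.End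

section Matrix

variable {ι R : Type*} [Fintype ι] [DecidableEq ι] [CommRing R]

lemma Matrix.toLin'_aeval (A : Matrix ι ι R) (g : R[X]) :
    Matrix.toLin' (aeval A g) = aeval (Matrix.toLin' A) g :=
  (aeval_algHom_apply (Matrix.toLinAlgEquiv' : Matrix ι ι R ≃ₐ[R] _) A g).symm

lemma Matrix.range_mulVecLin_mul_of_isUnit (A : Matrix ι ι R) {U : Matrix ι ι R}
    (hU : IsUnit U) : LinearMap.range (A * U).mulVecLin = LinearMap.range A.mulVecLin := by
  rw [Matrix.mulVecLin_mul]
  exact LinearMap.range_comp_of_range_eq_top _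
    (LinearMap.range_eq_top.mpr (Matrix.mulVec_surjective_iff_isUnit.mpr hU))

def Matrix.krylov {d : ℕ} (A : Matrix (Fin d) (Fin d) R) (v : Fin d → R) :
    Matrix (Fin d) (Fin d) R :=
  Matrix.of fun i k => (A ^ (k : ℕ) *ᵥ v) i

noncomputable def Matrix.krylovBasis {d : ℕ} (A : Matrix (Fin d) (Fin d) R) (v : Fin d → R)
    (h : IsUnit (A.krylov v).det) : Module.Basis (Fin d) R (Fin d → R) :=
  (Pi.basisFun R (Fin d)).map
    (Matrix.toLinearEquiv' (A.krylov v) ((A.krylov v).invertibleOfIsUnitDet h))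

lemma Matrix.krylovBasis_apply {d : ℕ} (A : Matrix (Fin d) (Fin d) R) (v : Fin d → R)
    (h : IsUnit (A.krylov v).det) (k : Fin d) :
    A.krylovBasis v h k = (Matrix.toLin' A ^ (k : ℕ)) v := by
  rw [← Matrix.toLin'_pow, Matrix.toLin'_apply, Matrix.krylovBasis, Module.Basis.map_apply,
    Pi.basisFun_apply]
  exact Matrix.mulVec_single_one (A.krylov v) k

end Matrix

noncomputable def coeffPoly {R : Type*} [Semiring R] (s : ℕ) (c : ℕ → R) : R[X] :=
  ∑ t ∈ Finset.range (s + 1), C (c t) * X ^ t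

section coeffPoly

variable {R : Type*} [Semiring R] {s : ℕ} {c : ℕ → R}

lemma coeff_coeffPoly (k : ℕ) : (coeffPoly s c).coeff k = if k ≤ s then c k else 0 := by
  simp [coeffPoly]

lemma natDegree_coeffPoly [Nontrivial R] (hcs : c s = 1) : (coeffPoly s c).natDegree = s :=
  natDegree_eq_of_le_of_coeff_ne_zero
    (natDegree_le_iff_coeff_eq_zero.mpr fun k hk => by
      rw [coeff_coeffPoly, if_neg (by exact_mod_cast hk.not_ge)])
    (by simp [coeff_coeffPoly, hcs])

lemma monic_coeffPoly (hcs : c s = 1) : (coeffPoly s c).Monic := by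
  nontriviality R
  rw [Monic, leadingCoeff, natDegree_coeffPoly hcs, coeff_coeffPoly, if_pos le_rfl, hcs]

end coeffPoly

lemma aeval_coeffPoly {R A : Type*} [CommSemiring R] [Semiring A] [Algebra R A] (s : ℕ)
    (c : ℕ → R) (x : A) :
    aeval x (coeffPoly s c) = ∑ t ∈ Finset.range (s + 1), c t • x ^ t := by
  simp [coeffPoly, Algebra.smul_def]

def cyclicShift (R : Type*) [Zero R] [One R] (n : ℕ) : Matrix (ZMod n) (ZMod n) R :=
  Matrix.of fun i j => if j = i + 1 then 1 else 0

namespace cyclicShift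

variable {R : Type*} [Semiring R] {n : ℕ} [NeZero n]

lemma pow_apply (k : ℕ) (i j : ZMod n) :
    (cyclicShift R n ^ k) i j = if j = i + k then 1 else 0 := by
  induction k generalizing j with
  | zero => simp [Matrix.one_apply, eq_comm]
  | succ k ih =>
    rw [pow_succ, Matrix.mul_apply, Finset.sum_eq_single (j - 1)]
    · rw [ih]
      simp [cyclicShift, sub_eq_iff_eq_add, add_assoc]
    · intro l _ hl
      simp only [cyclicShift, of_apply, mul_ite, mul_one, mul_zero]
      exact if_neg fun h => hl (by rw [h]; ring)
    · simp

lemma pow_card : cyclicShift R n ^ n = 1 := by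
  ext i j
  simp [pow_apply, Matrix.one_apply, eq_comm]

lemma isUnit : IsUnit (cyclicShift R n) :=
  IsUnit.of_pow_eq_one pow_card (NeZero.ne n)

lemma pow_mulVec_single_zero (k : ℕ) :
    cyclicShift R n ^ k *ᵥ Pi.single 0 1 = Pi.single (-(k : ZMod n)) 1 := by
  ext i
  simp [pow_apply, Pi.single_apply, eq_comm, ← eq_neg_iff_add_eq_zero]

end cyclicShift

lemma laurentShift_eq_aeval_mul {n : ℕ} [NeZero n] (p : ℤ) (s : ℕ) (c : ℕ → ℤ) :
    laurentShift n p s c =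
      aeval (cyclicShift ℤ n) (coeffPoly s c) * cyclicShift ℤ n ^ (p : ZMod n).val := by
  ext i j
  simp only [laurentShift, of_apply, aeval_coeffPoly, Finset.sum_mul, smul_mul_assoc, ← pow_add,
    Matrix.sum_apply, Matrix.smul_apply, cyclicShift.pow_apply, smul_eq_mul]
  refine Finset.sum_congr rfl fun t _ => ?_
  push_cast
  rw [ZMod.natCast_val, ZMod.cast_id', id, add_comm (t : ZMod n)]

noncomputable def finNegCastEquiv (n : ℕ) [NeZero n] : Fin n ≃ ZMod n :=
  Equiv.ofBijective (fun k => -((k : ℕ) : ZMod n)) <| by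
    refine (Fintype.bijective_iff_injective_and_card _).mpr ⟨fun k l hkl => ?_, by simp⟩
    have := congrArg ZMod.val (neg_injective hkl)
    rwa [ZMod.val_cast_of_lt k.isLt, ZMod.val_cast_of_lt l.isLt, Fin.val_inj] at this

noncomputable def cyclicShiftBasis (n : ℕ) [NeZero n] : Module.Basis (Fin n) ℤ (ZMod n → ℤ) :=
  (Pi.basisFun ℤ (ZMod n)).reindex (finNegCastEquiv n).symm

lemma cyclicShiftBasis_apply {n : ℕ} [NeZero n] (k : Fin n) :
    cyclicShiftBasis n k = (Matrix.toLin' (cyclicShift ℤ n) ^ (k : ℕ)) (Pi.single 0 1) := by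
  rw [← Matrix.toLin'_pow, Matrix.toLin'_apply, cyclicShift.pow_mulVec_single_zero]
  simp [cyclicShiftBasis, finNegCastEquiv]

section compMat

variable {s : ℕ} {c : ℕ → ℤ}

lemma compMat_mulVec_apply_of_add_one_lt (w : Fin s → ℤ) (i : Fin s) (h : (i : ℕ) + 1 < s) :
    (compMat s c *ᵥ w) i = w ⟨i + 1, h⟩ := by
  rw [Matrix.mulVec, dotProduct, Finset.sum_eq_single ⟨i + 1, h⟩]
  · simp [compMat, h.ne]
  · intro j _ hj
    simp [compMat, h.ne, Fin.ext_iff.not.mp hj]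
  · simp

lemma compMat_mulVec_apply_of_add_one_eq (w : Fin s → ℤ) (i : Fin s) (h : (i : ℕ) + 1 = s) :
    (compMat s c *ᵥ w) i = -∑ j : Fin s, c j * w j := by
  simp [Matrix.mulVec, dotProduct, compMat, h]

lemma compMat_pow_mulVec_apply (k : ℕ) (w : Fin s → ℤ) (i : Fin s) (h : (i : ℕ) + k < s) :
    (compMat s c ^ k *ᵥ w) i = w ⟨i + k, h⟩ := by
  induction k generalizing w with
  | zero => simp
  | succ k ih =>
    rw [pow_succ, ← Matrix.mulVec_mulVec, ih _ (by omega),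
      compMat_mulVec_apply_of_add_one_lt _ _ (by simpa using (by omega : (i : ℕ) + k + 1 < s))]
    simp [add_assoc]

lemma aeval_compMat_coeffPoly (hcs : c s = 1) : aeval (compMat s c) (coeffPoly s c) = 0 := by
  cases s with
  | zero => exact Subsingleton.elim _ _
  | succ m =>
  set A := compMat (m + 1) c
  set B := aeval A (coeffPoly (m + 1) c) with hB
  -- Row `0` of `B` vanishes, and row `i` of `B` is row `0` of `A ^ i * B = B * A ^ i`.
  have hrow : ∀ u, (B *ᵥ u) 0 = 0 := by
    intro u
    have hlast : (A ^ (m + 1) *ᵥ u) 0 = -∑ j : Fin (m + 1), c j * u j := by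
      rw [pow_succ, ← Matrix.mulVec_mulVec, compMat_pow_mulVec_apply m _ 0 (by simp),
        compMat_mulVec_apply_of_add_one_eq _ _ (by simp)]
    rw [hB, aeval_coeffPoly, Matrix.sum_mulVec, Finset.sum_apply, Finset.sum_range_succ, hcs,
      one_smul, hlast, ← Fin.sum_univ_eq_sum_range (fun t => ((c t • A ^ t) *ᵥ u) 0),
      add_neg_eq_zero]
    refine Finset.sum_congr rfl fun t _ => ?_
    rw [Matrix.smul_mulVec, Pi.smul_apply, smul_eq_mul,
      compMat_pow_mulVec_apply _ _ _ (by simp [t.is_le])]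
    simp
  have hcomm (i : ℕ) : A ^ i * B = B * A ^ i := by
    rw [← aeval_X_pow (R := ℤ), ← map_mul, ← map_mul, mul_comm]
  ext i j
  have := compMat_pow_mulVec_apply (c := c) i (B *ᵥ Pi.single j 1) 0 (by simp [i.is_le])
  rw [Matrix.mulVec_mulVec, hcomm, ← Matrix.mulVec_mulVec, hrow] at this
  simpa [Matrix.mulVec_single_one] using this.symm

end compMat

lemma isUnit_det_krylov_compMat_single_last (m : ℕ) (c : ℕ → ℤ) :
    IsUnit ((compMat (m + 1) c).krylov (Pi.single (Fin.last m) 1)).det := by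
  set K := (compMat (m + 1) c).krylov (Pi.single (Fin.last m) 1)
  have hentry (i k : Fin (m + 1)) (hki : (k : ℕ) ≤ i) :
      K.submatrix Fin.revPerm id i k = if k = i then 1 else 0 := by
    have hlt : ((Fin.rev i : Fin (m + 1)) : ℕ) + k < m + 1 := by
      rw [Fin.val_rev]; omega
    simp only [K, Matrix.submatrix_apply, id, Matrix.krylov, Matrix.of_apply, Fin.revPerm_apply,
      compMat_pow_mulVec_apply _ _ _ hlt, Pi.single_apply, Fin.ext_iff, Fin.val_rev, Fin.val_last]
    congr 1
    apply propext
    omega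
  have htri : (K.submatrix Fin.revPerm id).IsUpperTriangular := fun i k hki =>
    (hentry i k hki.le).trans (if_neg (ne_of_lt hki))
  have hdet := Matrix.det_permute Fin.revPerm K
  rw [Matrix.det_of_isUpperTriangular htri,
    Finset.prod_eq_one fun i _ => (hentry i i le_rfl).trans (if_pos rfl)] at hdet
  exact .of_mul_eq_one_right _ hdet.symm

noncomputable def cokerLaurentShiftEquiv (n : ℕ) [NeZero n] (p : ℤ) (s : ℕ) (c : ℕ → ℤ) :
    coker (laurentShift n p s c) ≃ₗ[ℤ]
      ℤ[X] ⧸ (Ideal.span {X ^ n - 1, coeffPoly s c}).restrictScalars ℤ :=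
  (Submodule.quotEquivOfEq _ _ <| by
      -- `coker` uses classical decidable equality; `mulVecLin` does not depend on it
      show LinearMap.range (laurentShift n p s c).mulVecLin = _
      rw [← Matrix.toLin'_aeval, Matrix.toLin'_apply', laurentShift_eq_aeval_mul,
        Matrix.range_mulVecLin_mul_of_isUnit _ (cyclicShift.isUnit.pow _)]).trans
    (Module.End.quotRangeAevalEquiv (cyclicShiftBasis n) cyclicShiftBasis_apply
      (monic_X_pow_sub_C 1 (NeZero.ne n)) natDegree_X_pow_sub_C
      (by rw [← Matrix.toLin'_aeval]; simp [cyclicShift.pow_card]) _)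

noncomputable def cokerCompMatEquiv (m n : ℕ) (c : ℕ → ℤ) (hcs : c (m + 1) = 1) :
    coker (compMat (m + 1) c ^ n - 1) ≃ₗ[ℤ]
      ℤ[X] ⧸ (Ideal.span {coeffPoly (m + 1) c, X ^ n - 1}).restrictScalars ℤ :=
  (Submodule.quotEquivOfEq _ _ <| by
      show LinearMap.range (compMat (m + 1) c ^ n - 1).mulVecLin = _
      rw [← Matrix.toLin'_aeval, Matrix.toLin'_apply', map_sub, map_pow, aeval_X, map_one]).trans
    (Module.End.quotRangeAevalEquiv
      (Matrix.krylovBasis _ _ (isUnit_det_krylov_compMat_single_last m c))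
      (Matrix.krylovBasis_apply _ _ _) (monic_coeffPoly hcs) (natDegree_coeffPoly hcs)
      (by rw [← Matrix.toLin'_aeval, aeval_compMat_coeffPoly hcs, map_zero, LinearMap.zero_apply])
      _)

theorem coker_laurentShift_iso_coker_compMat_pow_sub_one_general
    (n : ℕ) [NeZero n] (p : ℤ) (s : ℕ) (hs : 0 < s) (c : ℕ → ℤ)
    (hcs : c s = 1) :
    Nonempty (coker (laurentShift n p s c) ≃+ coker (compMat s c ^ n - 1)) := by
  obtain ⟨m, rfl⟩ := Nat.exists_eq_succ_of_ne_zero hs.ne'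
  exact ⟨((cokerLaurentShiftEquiv n p _ c).trans <|
    (Submodule.quotEquivOfEq _ _ (by rw [Set.pair_comm])).trans
      (cokerCompMatEquiv m n c hcs).symm).toAddEquiv⟩

theorem coker_laurentShift_iso_coker_compMat_pow_sub_one
    (n : ℕ) [NeZero n] (p : ℤ) (s : ℕ) (hs : 0 < s) (c : ℕ → ℤ)
    (hc0 : c 0 = 1) (hcs : c s = 1) :
    Nonempty (coker (laurentShift n p s c) ≃+ coker (compMat s c ^ n - 1)) :=
  coker_laurentShift_iso_coker_compMat_pow_sub_one_general n p s hs c hcs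
end
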